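/- arXiv:2511.14757 — 4 statements merged into one kernel-verified Lean document; each statement's English description precedes it below -/
import Mathlib

section
/- Let S and E be Polish spaces and T : S → E continuous. For each η ∈ (0,1) let π_η be a Borel probability measure on S, let m_η be the pushforward of π_η under T, and let Q_η be a Borel measurable kernel from E to probability measures on S such that π_η(A) = ∫_E Q_η(z)(A) m_η(dz) for every Borel A ⊆ S and such that Q_η(z)({s ∈ S : T(s) = z}) = 1 for every z ∈ E. Assume: (i) there is a compact K ⊆ E with m_η(K) = 1 for all η; (ii) {m_η}_{η∈(0,1)} satisfies the Laplace principle on E with a good rate function I_S : E → [0,∞]; (iii) there is a family of functions I^z : S → [0,∞] (z ∈ E) with I^z(s) = +∞ whenever T(s) ≠ z, such that for every bounded continuous F : S → ℝ the function F̃(z) := inf_{s∈S} [F(s) + I^z(s)] is bounded and continuous on E, and sup_{z∈K} | −η · log ∫_S exp(−F(s)/η) Q_η(z)(ds) − F̃(z) | → 0 as η ↓ 0. Then {π_η}_{η∈(0,1)} satisfies the Laplace principle on S with rate function I_D(s) := I_S(T(s)) + I^{T(s)}(s). (The transfer mechanism proved in Section 4, from which Theorem 1.2 follows.) -/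
open MeasureTheory Filter Set
open scoped ENNReal NNReal Classical

noncomputable section

/-- A family `(μ_η)_{η∈(0,1)}` satisfies the Laplace principle with rate function
`I : X → [0,∞]` if for every bounded continuous `F : X → ℝ`,
`lim_{η↓0} −η log ∫ exp(−F/η) dμ_η = inf_x [F(x) + I(x)]` (the possibly infinite
infimum being taken in the extended reals). -/
def LaplacePrinciple {X : Type*} [TopologicalSpace X] [MeasurableSpace X]
    (μ : ℝ → Measure X) (I : X → ℝ≥0∞) : Prop :=
  ∀ F : X → ℝ, Continuous F → (∃ B, ∀ x, |F x| ≤ B) →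
    Tendsto (fun η : ℝ => ((-η * Real.log (∫ x, Real.exp (-F x / η) ∂(μ η)) : ℝ) : EReal))
      (nhdsWithin 0 (Set.Ioi 0))
      (nhds (⨅ x, ((F x : EReal) + (I x : EReal))))

/-- A rate function is good if all its sublevel sets are compact. -/
def GoodRate {X : Type*} [TopologicalSpace X] (I : X → ℝ≥0∞) : Prop :=
  ∀ a : ℝ≥0, IsCompact {x | I x ≤ (a : ℝ≥0∞)}

/-!
Disintegrating `π_η` along `T`, the Laplace integral of `F` under `π_η` is the `m_η`-integral of
the fiberwise Laplace integrals `∫ exp(−F/η) dQ_η(z)`. On `K`, which carries all of `m_η`, these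
lie between `exp(−(F̃ ± ε)/η)`, so `−η log ∫ exp(−F/η) dπ_η` stays within `ε` of
`−η log ∫ exp(−F̃/η) dm_η`, whose limit is `inf_z [F̃(z) + I_S(z)]` by the Laplace principle for
`m_η`. As `I^z` is infinite off the fiber over `z`, exchanging the two infima turns this limit into
`inf_s [F(s) + I_D(s)]`.
-/

open ProbabilityTheory Topology

lemma EReal.iInf_add_of_ne_bot {ι : Sort*} {g : ι → EReal} {c : EReal} (hg : ⨅ i, g i ≠ ⊥)
    (hc : c ≠ ⊥) : (⨅ i, g i) + c = ⨅ i, (g i + c) :=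
  Monotone.map_iInf_of_continuousAt (f := (· + c))
    ((EReal.continuousAt_add (.inr hc) (.inl hg)).comp (Continuous.prodMk_left c).continuousAt)
    (fun _ _ h => add_le_add_left h c) (EReal.top_add_of_ne_bot hc)

lemma EReal.tendsto_coe_of_tendsto_sub {α : Type*} {l : Filter α} {f g : α → ℝ} {L : EReal}
    (hf : Tendsto (fun x => (f x : EReal)) l (𝓝 L)) (hgf : Tendsto (fun x => g x - f x) l (𝓝 0)) :
    Tendsto (fun x => (g x : EReal)) l (𝓝 L) := by
  have hsum := (EReal.continuousAt_add (p := (L, 0)) (.inr (by simp)) (.inr (by simp))).tendsto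
    |>.comp (hf.prodMk_nhds (EReal.tendsto_coe.2 hgf))
  convert hsum using 2 with x
  · simp only [Function.comp_apply, ← EReal.coe_add, add_sub_cancel]
  · simp

lemma iInf_coe_add_eq_iInf_fiber {S E : Type*} (T : S → E) (IS : E → ℝ≥0∞) (Iz : E → S → ℝ≥0∞)
    (hIfib : ∀ z s, T s ≠ z → Iz z s = ⊤) (F : S → ℝ) (Ft : E → ℝ)
    (hFt : ∀ z, (Ft z : EReal) = ⨅ s, ((F s : EReal) + (Iz z s : EReal))) :
    ⨅ z, ((Ft z : EReal) + (IS z : EReal))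
      = ⨅ s, ((F s : EReal) + ((IS (T s) + Iz (T s) s : ℝ≥0∞) : EReal)) := by
  have hdiag : ∀ s,
      (F s : EReal) + ↑(IS (T s) + Iz (T s) s) = (F s : EReal) + Iz (T s) s + IS (T s) :=
    fun s => by rw [EReal.coe_ennreal_add, add_comm (IS (T s) : EReal), add_assoc]
  have hfiber : ∀ s z,
      (F s : EReal) + ↑(IS (T s) + Iz (T s) s) ≤ (F s : EReal) + Iz z s + IS z := by
    intro s z
    by_cases hz : T s = z
    · exact hz ▸ (hdiag s).le
    · rw [hIfib z s hz, EReal.coe_ennreal_top, EReal.add_top_of_ne_bot (EReal.coe_ne_bot _),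
        EReal.top_add_of_ne_bot (EReal.coe_ennreal_ne_bot _)]
      exact le_top
  calc ⨅ z, ((Ft z : EReal) + (IS z : EReal))
      = ⨅ z, ⨅ s, ((F s : EReal) + Iz z s + IS z) := iInf_congr fun z => by
        rw [hFt z]
        exact EReal.iInf_add_of_ne_bot (hFt z ▸ EReal.coe_ne_bot _) (EReal.coe_ennreal_ne_bot _)
    _ = ⨅ s, ⨅ z, ((F s : EReal) + Iz z s + IS z) := iInf_comm
    _ = _ := iInf_congr fun s => le_antisymm
        ((iInf_le _ (T s)).trans_eq (hdiag s).symm)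
        (le_iInf (hfiber s))

lemma MeasureTheory.Measure.integral_comp_kernel {S E : Type*} [MeasurableSpace S]
    [MeasurableSpace E]
    {m : Measure E} {κ : Kernel E S} {f : S → ℝ} (hf : Integrable f (κ ∘ₘ m)) :
    ∫ s, f s ∂(κ ∘ₘ m) = ∫ z, ∫ s, f s ∂κ z ∂m := by
  rw [Measure.comp_eq_comp_const_apply] at hf ⊢
  rw [Kernel.integral_comp hf, Kernel.const_apply]

def laplaceFunctional {X : Type*} [MeasurableSpace X] (μ : Measure X) (F : X → ℝ) (η : ℝ) : ℝ :=
  -η * Real.log (∫ x, Real.exp (-F x / η) ∂μ)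

lemma abs_neg_mul_log_sub_le_iff {η x c ε : ℝ} (hη : 0 < η) (hx : 0 < x) :
    |-η * Real.log x - c| ≤ ε ↔ Real.exp (-(c + ε) / η) ≤ x ∧ x ≤ Real.exp (-(c - ε) / η) := by
  rw [abs_le, ← Real.le_log_iff_exp_le hx, ← Real.log_le_iff_le_exp hx, div_le_iff₀ hη,
    le_div_iff₀ hη]
  constructor <;> rintro ⟨h₁, h₂⟩ <;> constructor <;> linarith

lemma exp_neg_laplaceFunctional_add_div {X : Type*} [MeasurableSpace X] {μ : Measure X}
    {G : X → ℝ} {η : ℝ} (hη : η ≠ 0) (hpos : 0 < ∫ x, Real.exp (-G x / η) ∂μ) (c : ℝ) :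
    Real.exp (-(laplaceFunctional μ G η + c) / η) = ∫ x, Real.exp (-(G x + c) / η) ∂μ := by
  have hsplit : ∀ x, Real.exp (-(G x + c) / η) = Real.exp (-G x / η) * Real.exp (-c / η) :=
    fun x => by rw [← Real.exp_add]; ring_nf
  rw [integral_congr_ae (.of_forall hsplit), integral_mul_const, laplaceFunctional,
    show -(-η * Real.log _ + c) / η = Real.log (∫ x, Real.exp (-G x / η) ∂μ) + -c / η by
      field_simp; ring,
    Real.exp_add, Real.exp_log hpos]

lemma integrable_exp_neg_div {X : Type*} [MeasurableSpace X] (μ : Measure X) [IsFiniteMeasure μ]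
    {F : X → ℝ} (hF : Measurable F) {B : ℝ} (hB : ∀ x, -B ≤ F x) {η : ℝ} (hη : 0 < η) :
    Integrable (fun x => Real.exp (-F x / η)) μ :=
  .of_bound (by fun_prop) (Real.exp (B / η)) (.of_forall fun x => by
    rw [Real.norm_eq_abs, Real.abs_exp]
    gcongr
    linarith [hB x])

lemma integral_exp_neg_div_pos {X : Type*} [MeasurableSpace X] (μ : Measure X)
    [IsProbabilityMeasure μ] {F : X → ℝ} (hF : Measurable F) {B : ℝ} (hB : ∀ x, -B ≤ F x)
    {η : ℝ} (hη : 0 < η) : 0 < ∫ x, Real.exp (-F x / η) ∂μ :=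
  integral_exp_pos (integrable_exp_neg_div μ hF hB hη)

lemma abs_laplaceFunctional_comp_sub_le {S E : Type*} [MeasurableSpace S] [MeasurableSpace E]
    {m : Measure E} [IsProbabilityMeasure m] {κ : Kernel E S} [IsMarkovKernel κ]
    {F : S → ℝ} {G : E → ℝ} (hF : Measurable F) (hG : Measurable G) {B C : ℝ}
    (hFB : ∀ s, -B ≤ F s) (hGC : ∀ z, -C ≤ G z) {η ε : ℝ} (hη : 0 < η)
    (hfiber : ∀ᵐ z ∂m, |laplaceFunctional (κ z) F η - G z| ≤ ε) :
    |laplaceFunctional (κ ∘ₘ m) F η - laplaceFunctional m G η| ≤ ε := by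
  have hint := integrable_exp_neg_div (κ ∘ₘ m) hF hFB hη
  have hint_fiber : Integrable (fun z => ∫ s, Real.exp (-F s / η) ∂κ z) m := by
    simpa only [Real.norm_eq_abs, Real.abs_exp]
      using Measure.integrable_integral_norm_of_integrable_comp hint
  have hint_shift (c : ℝ) : Integrable (fun z => Real.exp (-(G z + c) / η)) m :=
    integrable_exp_neg_div m (hG.add_const c) (fun z => by linarith [hGC z] : ∀ z, -(C - c) ≤ _) hη
  have hsandwich : ∀ᵐ z ∂m, Real.exp (-(G z + ε) / η) ≤ ∫ s, Real.exp (-F s / η) ∂κ z ∧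
      ∫ s, Real.exp (-F s / η) ∂κ z ≤ Real.exp (-(G z + -ε) / η) := by
    filter_upwards [hfiber] with z hz
    rwa [laplaceFunctional, abs_neg_mul_log_sub_le_iff hη (integral_exp_neg_div_pos _ hF hFB hη),
      sub_eq_add_neg] at hz
  have hposG := integral_exp_neg_div_pos m hG hGC hη
  rw [laplaceFunctional, abs_neg_mul_log_sub_le_iff hη (integral_exp_neg_div_pos _ hF hFB hη),
    sub_eq_add_neg, exp_neg_laplaceFunctional_add_div hη.ne' hposG,
    exp_neg_laplaceFunctional_add_div hη.ne' hposG, Measure.integral_comp_kernel hint]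
  exact ⟨integral_mono_ae (hint_shift ε) hint_fiber (hsandwich.mono fun _ h => h.1),
    integral_mono_ae hint_fiber (hint_shift (-ε)) (hsandwich.mono fun _ h => h.2)⟩

theorem laplace_principle_transfer_general
    {S E : Type*}
    [TopologicalSpace S] [MeasurableSpace S] [BorelSpace S]
    [TopologicalSpace E] [PolishSpace E] [MeasurableSpace E] [BorelSpace E]
    (T : S → E) (hT : Continuous T)
    (π : ℝ → Measure S) (hπ : ∀ η ∈ Set.Ioo (0:ℝ) 1, IsProbabilityMeasure (π η))
    (Q : ℝ → E → Measure S)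
    (hQprob : ∀ η ∈ Set.Ioo (0:ℝ) 1, ∀ z, IsProbabilityMeasure (Q η z))
    (hQmeas : ∀ η ∈ Set.Ioo (0:ℝ) 1, Measurable (Q η))
    (hQdis : ∀ η ∈ Set.Ioo (0:ℝ) 1, ∀ A : Set S, MeasurableSet A →
      π η A = ∫⁻ z, Q η z A ∂((π η).map T))
    (K : Set E) (hK : IsCompact K)
    (hKm : ∀ η ∈ Set.Ioo (0:ℝ) 1, (π η).map T K = 1)
    (IS : E → ℝ≥0∞)
    (hIS : LaplacePrinciple (fun η => (π η).map T) IS)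
    (Iz : E → S → ℝ≥0∞)
    (hIfib : ∀ z s, T s ≠ z → Iz z s = ⊤)
    (hunif : ∀ F : S → ℝ, Continuous F → (∃ B, ∀ s, |F s| ≤ B) →
      ∃ Ft : E → ℝ, Continuous Ft ∧ (∃ B, ∀ z, |Ft z| ≤ B) ∧
        (∀ z, (Ft z : EReal) = ⨅ s, ((F s : EReal) + (Iz z s : EReal))) ∧
        (∀ ε > (0:ℝ), ∃ η₀ > (0:ℝ), ∀ η ∈ Set.Ioo (0:ℝ) 1, η < η₀ → ∀ z ∈ K,
          |(-η * Real.log (∫ s, Real.exp (-F s / η) ∂(Q η z))) - Ft z| ≤ ε)) :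
    LaplacePrinciple π (fun s => IS (T s) + Iz (T s) s) := by
  rintro F hF ⟨B, hB⟩
  obtain ⟨Ft, hFt, ⟨C, hC⟩, hFt_inf, hFt_unif⟩ := hunif F hF ⟨B, hB⟩
  rw [← iInf_coe_add_eq_iInf_fiber T IS Iz hIfib F Ft hFt_inf]
  refine EReal.tendsto_coe_of_tendsto_sub (hIS Ft hFt ⟨C, hC⟩)
    (Metric.tendsto_nhds.2 fun ε hε => ?_)
  obtain ⟨η₀, hη₀, hclose⟩ := hFt_unif (ε / 2) (half_pos hε)
  filter_upwards [Ioo_mem_nhdsGT (lt_min one_pos hη₀)] with η ⟨hη, hηη₀⟩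
  have hη1 : η ∈ Ioo 0 1 := ⟨hη, hηη₀.trans_le (min_le_left _ _)⟩
  have := hπ η hη1
  have := Measure.isProbabilityMeasure_map (μ := π η) hT.aemeasurable
  let κ : Kernel E S := ⟨Q η, hQmeas η hη1⟩
  have : IsMarkovKernel κ := ⟨hQprob η hη1⟩
  have hdis : π η = κ ∘ₘ (π η).map T := Measure.ext fun A hA => by
    rw [Measure.bind_apply hA κ.aemeasurable]
    exact hQdis η hη1 A hA
  have hK_ae : ∀ᵐ z ∂(π η).map T, z ∈ K := by
    rw [ae_mem_iff_measure_eq hK.isClosed.measurableSet.nullMeasurableSet, measure_univ]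
    exact hKm η hη1
  have hfiber : ∀ᵐ z ∂(π η).map T, |laplaceFunctional (κ z) F η - Ft z| ≤ ε / 2 :=
    hK_ae.mono (hclose η hη1 (hηη₀.trans_le (min_le_right _ _)))
  have hπ_close := abs_laplaceFunctional_comp_sub_le hF.measurable hFt.measurable
    (fun s => (abs_le.1 (hB s)).1) (fun z => (abs_le.1 (hC z)).1) hη hfiber
  rw [← hdis] at hπ_close
  rw [Real.dist_eq, sub_zero]
  exact hπ_close.trans_lt (half_lt_self hε)

/-- the transfer mechanism: let `T : S → E` be continuous between Polish
spaces, `π_η` probability measures on `S` with pushforwards `m_η = T_*π_η` and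
disintegrations `Q_η(z)` concentrated on the fibers `{T = z}`.  If the `m_η` are all
supported on a common compact `K`, satisfy a Laplace principle with good rate `I_S`,
and the fiberwise Laplace functionals converge uniformly on `K` to
`F̃(z) = inf_s [F(s) + I^z(s)]` (bounded and continuous) for a family of fiber rates
`I^z` that are `+∞` off the fiber, then `π_η` satisfies the Laplace principle on `S`
with rate `I_D(s) = I_S(T(s)) + I^{T(s)}(s)`. -/
theorem laplace_principle_transfer
    {S E : Type*}
    [TopologicalSpace S] [PolishSpace S] [MeasurableSpace S] [BorelSpace S]
    [TopologicalSpace E] [PolishSpace E] [MeasurableSpace E] [BorelSpace E]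
    (T : S → E) (hT : Continuous T)
    (π : ℝ → Measure S) (hπ : ∀ η ∈ Set.Ioo (0:ℝ) 1, IsProbabilityMeasure (π η))
    (Q : ℝ → E → Measure S)
    (hQprob : ∀ η ∈ Set.Ioo (0:ℝ) 1, ∀ z, IsProbabilityMeasure (Q η z))
    (hQmeas : ∀ η ∈ Set.Ioo (0:ℝ) 1, Measurable (Q η))
    (hQdis : ∀ η ∈ Set.Ioo (0:ℝ) 1, ∀ A : Set S, MeasurableSet A →
      π η A = ∫⁻ z, Q η z A ∂((π η).map T))
    (hQfib : ∀ η ∈ Set.Ioo (0:ℝ) 1, ∀ z, Q η z {s | T s = z} = 1)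
    (K : Set E) (hK : IsCompact K)
    (hKm : ∀ η ∈ Set.Ioo (0:ℝ) 1, (π η).map T K = 1)
    (IS : E → ℝ≥0∞)
    (hIS : LaplacePrinciple (fun η => (π η).map T) IS) (hISgood : GoodRate IS)
    (Iz : E → S → ℝ≥0∞)
    (hIfib : ∀ z s, T s ≠ z → Iz z s = ⊤)
    (hunif : ∀ F : S → ℝ, Continuous F → (∃ B, ∀ s, |F s| ≤ B) →
      ∃ Ft : E → ℝ, Continuous Ft ∧ (∃ B, ∀ z, |Ft z| ≤ B) ∧
        (∀ z, (Ft z : EReal) = ⨅ s, ((F s : EReal) + (Iz z s : EReal))) ∧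
        (∀ ε > (0:ℝ), ∃ η₀ > (0:ℝ), ∀ η ∈ Set.Ioo (0:ℝ) 1, η < η₀ → ∀ z ∈ K,
          |(-η * Real.log (∫ s, Real.exp (-F s / η) ∂(Q η z))) - Ft z| ≤ ε)) :
    LaplacePrinciple π (fun s => IS (T s) + Iz (T s) s) :=
  laplace_principle_transfer_general T hT π hπ Q hQprob hQmeas hQdis K hK hKm IS hIS Iz hIfib hunif

end
end

section
/- Let d ≥ 1, x, y ∈ ℝ^d, M ≥ 0, and let ν ∈ L²([0,1];ℝ^d) with ∫₀¹ |ν(s)|² ds ≤ M. Suppose φ : [0,1) → ℝ^d satisfies φ(t) = x + ∫₀ᵗ ( −(φ(s) − y)/(1 − s) + ν(s) ) ds for all t ∈ [0,1). Then for every t ∈ [0,1): |φ(t) − y| ≤ (1 − t)·|x − y| + √(M·(1 − t)). In particular, φ extends to a continuous path on [0,1] with φ(1) = y, and for every δ ∈ (0,1], sup_{t∈[1−δ,1]} |φ(t) − y| ≤ δ·|x − y| + √(M·δ). (The deterministic endpoint estimate of Lemma 3.7 / lem:controlled-bridges-near-y in the Brownian-bridge case.) -/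
/-!
Put `u(t) = (φ(t) - y) / (1 - t)`. The equation says `u' = ν / (1 - t)`, so
`φ(t) - y = (1 - t) (x - y + ∫₀ᵗ ν(s) / (1 - s) ds)`, and Cauchy–Schwarz together with
`∫₀ᵗ (1 - s)⁻² ds ≤ (1 - t)⁻¹` bounds the integral by `√(M / (1 - t))`. Since `φ` is only
absolutely continuous, the product rule behind `u' = ν / (1 - t)` is obtained from Fubini's
theorem on the triangle `{r ≤ s}` instead of by differentiating.
-/

open MeasureTheory Set

noncomputable section

abbrev Euc (d : ℕ) := EuclideanSpace ℝ (Fin d)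

/-- `C₁ = C([0,1], ℝ^d)` with the supremum metric. -/
abbrev PathSp (d : ℕ) := C(Set.Icc (0:ℝ) 1, Euc d)

open Filter Topology

theorem integral_norm_mul_norm_le_sqrt_mul_sqrt {α F G : Type*} [MeasurableSpace α]
    {μ : Measure α} [NormedAddCommGroup F] [NormedAddCommGroup G] {f : α → F} {g : α → G}
    (hf : MemLp f 2 μ) (hg : MemLp g 2 μ) :
    ∫ a, ‖f a‖ * ‖g a‖ ∂μ ≤ √(∫ a, ‖f a‖ ^ 2 ∂μ) * √(∫ a, ‖g a‖ ^ 2 ∂μ) := by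
  have := integral_mul_le_Lp_mul_Lq_of_nonneg Real.HolderConjugate.two_two
    (ae_of_all _ fun a => norm_nonneg (f a)) (ae_of_all _ fun a => norm_nonneg (g a))
    (by rw [ENNReal.ofReal_ofNat]; exact hf.norm) (by rw [ENNReal.ofReal_ofNat]; exact hg.norm)
  simpa only [Real.rpow_two, ← Real.sqrt_eq_rpow] using this

theorem tendsto_of_norm_sub_le_bridge_bound {E : Type*} [SeminormedAddCommGroup E]
    {f : ℝ → E} {y : E} {A M : ℝ} {s : Set ℝ}
    (hf : ∀ t ∈ s, ‖f t - y‖ ≤ (1 - t) * A + √(M * (1 - t))) :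
    Tendsto f (𝓝[s] 1) (𝓝 y) := by
  rw [tendsto_iff_norm_sub_tendsto_zero]
  refine squeeze_zero' (Eventually.of_forall fun _ => norm_nonneg _)
    (eventually_nhdsWithin_of_forall hf) ?_
  have : Continuous fun t : ℝ => (1 - t) * A + √(M * (1 - t)) := by fun_prop
  simpa using this.continuousWithinAt.tendsto (s := s) (x := 1)

theorem continuousOn_update_Icc_of_tendsto {X : Type*} [TopologicalSpace X]
    {f : ℝ → X} {a b : ℝ} {y : X}
    (hf : ContinuousOn f (Ico a b)) (hy : Tendsto f (𝓝[Ico a b] b) (𝓝 y)) :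
    ContinuousOn (Function.update f b y) (Icc a b) := by
  rw [continuousOn_update_iff, Icc_sdiff_right]
  exact ⟨hf, fun _ => hy⟩

theorem hasDerivAt_inv_one_sub {s : ℝ} (hs : s ≠ 1) :
    HasDerivAt (fun s : ℝ => (1 - s)⁻¹) ((1 - s)⁻¹ ^ 2) s :=
  (((hasDerivAt_id s).const_sub 1).inv (sub_ne_zero.2 hs.symm)).congr_deriv
    (by simp only [id, neg_neg, one_div, inv_pow])

theorem intervalIntegrable_inv_one_sub_sq {t : ℝ} (ht : t < 1) :
    IntervalIntegrable (fun s : ℝ => (1 - s)⁻¹ ^ 2) volume 0 t :=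
  (ContinuousOn.pow ((continuousOn_const.sub continuousOn_id).inv₀ fun _ hs =>
    sub_ne_zero.2 (hs.2.trans_lt (max_lt zero_lt_one ht)).ne') 2).intervalIntegrable

theorem integral_inv_one_sub_sq {t : ℝ} (ht : t < 1) :
    ∫ s in (0:ℝ)..t, (1 - s)⁻¹ ^ 2 = (1 - t)⁻¹ - 1 := by
  rw [intervalIntegral.integral_eq_sub_of_hasDerivAt (fun s hs =>
    hasDerivAt_inv_one_sub (hs.2.trans_lt (max_lt zero_lt_one ht)).ne)
    (intervalIntegrable_inv_one_sub_sq ht)]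
  norm_num

section

variable {E : Type*} [NormedAddCommGroup E] [NormedSpace ℝ E]

theorem intervalIntegral.continuousOn_primitive_Ico {f : ℝ → E} {a b : ℝ}
    (hf : ∀ t ∈ Ico a b, IntervalIntegrable f volume a t) :
    ContinuousOn (fun t => ∫ s in a..t, f s) (Ico a b) := by
  intro t ht
  obtain ⟨c, htc, hcb⟩ := exists_between ht.2
  have hc : IntervalIntegrable f volume (min a a) (max a c) := by
    simpa [ht.1.trans htc.le] using hf c ⟨ht.1.trans htc.le, hcb⟩
  refine (continuousWithinAt_primitive (measure_singleton t) hc).mono_of_mem_nhdsWithin ?_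
  exact mem_of_superset (inter_mem_nhdsWithin _ (Iio_mem_nhds htc))
    fun s hs => ⟨hs.1.1, hs.2.le⟩

theorem norm_integral_inv_one_sub_smul_le {ν : ℝ → E} {t : ℝ} (ht0 : 0 ≤ t) (ht1 : t < 1)
    (hν : MemLp ν 2 (volume.restrict (Ioc 0 t))) :
    ‖∫ s in (0:ℝ)..t, (1 - s)⁻¹ • ν s‖ ≤ √((1 - t)⁻¹) * √(∫ s in (0:ℝ)..t, ‖ν s‖ ^ 2) := by
  have hw : MemLp (fun s : ℝ => (1 - s)⁻¹) 2 (volume.restrict (Ioc 0 t)) := by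
    refine MemLp.of_bound (by fun_prop) (1 - t)⁻¹ (ae_restrict_of_forall_mem measurableSet_Ioc
      fun s hs => ?_)
    rw [Real.norm_of_nonneg (inv_nonneg.2 (by linarith [hs.2]))]
    gcongr
    exact hs.2
  calc ‖∫ s in (0:ℝ)..t, (1 - s)⁻¹ • ν s‖
      ≤ ∫ s in Ioc 0 t, ‖(1 - s)⁻¹‖ * ‖ν s‖ := by
        simpa only [intervalIntegral.integral_of_le ht0, norm_smul]
          using norm_integral_le_integral_norm (μ := volume.restrict (Ioc 0 t))
            fun s => (1 - s)⁻¹ • ν s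
    _ ≤ √(∫ s in Ioc 0 t, ‖(1 - s)⁻¹‖ ^ 2) * √(∫ s in Ioc 0 t, ‖ν s‖ ^ 2) :=
        integral_norm_mul_norm_le_sqrt_mul_sqrt hw hν
    _ ≤ √((1 - t)⁻¹) * √(∫ s in (0:ℝ)..t, ‖ν s‖ ^ 2) := by
        simp only [Real.norm_eq_abs, sq_abs, ← intervalIntegral.integral_of_le ht0,
          integral_inv_one_sub_sq ht1]
        gcongr
        linarith

variable [CompleteSpace E]

theorem intervalIntegral.integral_deriv_smul_primitive {a b : ℝ} (hab : a ≤ b) {f : ℝ → E}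
    {g g' : ℝ → ℝ} (hf : IntervalIntegrable f volume a b)
    (hg : ∀ s ∈ Icc a b, HasDerivAt g (g' s) s) (hg' : IntervalIntegrable g' volume a b) :
    ∫ s in a..b, g' s • ∫ r in a..s, f r = ∫ r in a..b, (g b - g r) • f r := by
  let K : ℝ → ℝ → E := fun s r =>
    {p : ℝ × ℝ | p.2 ≤ p.1}.indicator (fun p => g' p.1 • f p.2) (s, r)
  have hK : Integrable (Function.uncurry K)
      ((volume.restrict (Ioc a b)).prod (volume.restrict (Ioc a b))) :=
    (hg'.1.smul_prod hf.1).indicator (measurableSet_le measurable_snd measurable_fst)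
  have integral_K_left : ∀ s ∈ Ioc a b, ∫ r in Ioc a b, K s r = g' s • ∫ r in a..s, f r := by
    intro s hs
    have : ∀ r, K s r = (Iic s).indicator (fun r => g' s • f r) r := fun r => by
      simp only [K, indicator_apply, mem_ofPred_eq, mem_Iic]
    simp_rw [this]
    rw [setIntegral_indicator measurableSet_Iic, Ioc_inter_Iic, min_eq_right hs.2,
      MeasureTheory.integral_smul, intervalIntegral.integral_of_le hs.1.le]
  have integral_K_right : ∀ r ∈ Ioc a b, ∫ s in Ioc a b, K s r = (g b - g r) • f r := by
    intro r hr
    have : ∀ s, K s r = (Ici r).indicator (fun s => g' s • f r) s := fun s => by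
      simp only [K, indicator_apply, mem_ofPred_eq, mem_Ici]
    have hIcc : Ioc a b ∩ Ici r = Icc r b := by
      ext s; simp only [mem_inter_iff, mem_Ioc, mem_Ici, mem_Icc]
      exact ⟨fun h => ⟨h.2, h.1.2⟩, fun h => ⟨⟨hr.1.trans_le h.1, h.2⟩, h.1⟩⟩
    simp_rw [this]
    rw [setIntegral_indicator measurableSet_Ici, hIcc, integral_Icc_eq_integral_Ioc,
      _root_.integral_smul_const, ← intervalIntegral.integral_of_le hr.2,
      intervalIntegral.integral_eq_sub_of_hasDerivAt]
    · intro s hs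
      rw [uIcc_of_le hr.2] at hs
      exact hg s ⟨hr.1.le.trans hs.1, hs.2⟩
    · exact hg'.mono_set (by
        rw [uIcc_of_le hr.2, uIcc_of_le hab]; exact Icc_subset_Icc hr.1.le le_rfl)
  rw [intervalIntegral.integral_of_le hab, intervalIntegral.integral_of_le hab,
    ← setIntegral_congr_fun measurableSet_Ioc integral_K_left, integral_integral_swap hK,
    setIntegral_congr_fun measurableSet_Ioc integral_K_right]

theorem intervalIntegral.integral_deriv_smul_add_smul_primitive {a b : ℝ} (hab : a ≤ b)
    (c : E) {f : ℝ → E} {g g' : ℝ → ℝ} (hf : IntervalIntegrable f volume a b)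
    (hg : ∀ s ∈ Icc a b, HasDerivAt g (g' s) s) (hg' : IntervalIntegrable g' volume a b) :
    ∫ s in a..b, (g' s • (c + ∫ r in a..s, f r) + g s • f s) =
      g b • (c + ∫ r in a..b, f r) - g a • c := by
  have hF : ContinuousOn (fun s => ∫ r in a..s, f r) (uIcc a b) :=
    continuousOn_primitive_interval' hf left_mem_uIcc
  have hgc : ContinuousOn g (uIcc a b) := fun s hs =>
    (hg s (by rwa [uIcc_of_le hab] at hs)).continuousAt.continuousWithinAt
  simp_rw [smul_add]
  rw [integral_add ((hg'.smul_continuousOn continuousOn_const).add (hg'.smul_continuousOn hF))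
      (hf.continuousOn_smul hgc),
    integral_add (hg'.smul_continuousOn continuousOn_const) (hg'.smul_continuousOn hF),
    integral_smul_const,
    integral_eq_sub_of_hasDerivAt (fun s hs => hg s (by rwa [uIcc_of_le hab] at hs)) hg',
    integral_deriv_smul_primitive hab hf hg hg']
  simp_rw [sub_smul]
  rw [integral_sub (hf.continuousOn_smul continuousOn_const) (hf.continuousOn_smul hgc),
    integral_smul]
  module

theorem inv_one_sub_smul_sub_eq_of_bridge {x y : E} {ν φ : ℝ → E} {t : ℝ}
    (ht0 : 0 ≤ t) (ht1 : t < 1)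
    (hint : IntervalIntegrable (fun s => (1 - s)⁻¹ • (y - φ s) + ν s) volume 0 t)
    (hφ : ∀ s ∈ Icc 0 t, φ s = x + ∫ r in (0:ℝ)..s, ((1 - r)⁻¹ • (y - φ r) + ν r)) :
    (1 - t)⁻¹ • (φ t - y) = (x - y) + ∫ s in (0:ℝ)..t, (1 - s)⁻¹ • ν s := by
  have hsub : ∀ s ∈ Icc 0 t,
      φ s - y = (x - y) + ∫ r in (0:ℝ)..s, ((1 - r)⁻¹ • (y - φ r) + ν r) := fun s hs => by
    rw [hφ s hs]; abel
  have key := intervalIntegral.integral_deriv_smul_add_smul_primitive ht0 (x - y) hint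
    (fun _ hs => hasDerivAt_inv_one_sub (hs.2.trans_lt ht1).ne)
    (intervalIntegrable_inv_one_sub_sq ht1)
  rw [← hsub t ⟨ht0, le_rfl⟩, sub_zero, inv_one, one_smul] at key
  have hcongr : ∫ s in (0:ℝ)..t, ((1 - s)⁻¹ ^ 2 •
        ((x - y) + ∫ r in (0:ℝ)..s, ((1 - r)⁻¹ • (y - φ r) + ν r)) +
        (1 - s)⁻¹ • ((1 - s)⁻¹ • (y - φ s) + ν s)) =
      ∫ s in (0:ℝ)..t, (1 - s)⁻¹ • ν s := by
    refine intervalIntegral.integral_congr fun s hs => ?_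
    rw [uIcc_of_le ht0] at hs
    rw [← hsub s hs]
    -- the weight `(1 - s)⁻²` is the derivative of `(1 - s)⁻¹`, so the terms in `φ` cancel
    module
  rw [← hcongr, key, add_sub_cancel]

theorem norm_sub_le_of_bridge {x y : E} {ν φ : ℝ → E} {M t : ℝ} (ht0 : 0 ≤ t) (ht1 : t < 1)
    (hν : MemLp ν 2 (volume.restrict (Ioc 0 t))) (hνM : ∫ s in (0:ℝ)..t, ‖ν s‖ ^ 2 ≤ M)
    (hint : IntervalIntegrable (fun s => (1 - s)⁻¹ • (y - φ s) + ν s) volume 0 t)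
    (hφ : ∀ s ∈ Icc 0 t, φ s = x + ∫ r in (0:ℝ)..s, ((1 - r)⁻¹ • (y - φ r) + ν r)) :
    ‖φ t - y‖ ≤ (1 - t) * ‖x - y‖ + √(M * (1 - t)) := by
  have h1t : 0 < 1 - t := sub_pos.2 ht1
  have hφt : φ t - y = (1 - t) • ((x - y) + ∫ s in (0:ℝ)..t, (1 - s)⁻¹ • ν s) := by
    rw [← inv_one_sub_smul_sub_eq_of_bridge ht0 ht1 hint hφ, smul_smul,
      mul_inv_cancel₀ h1t.ne', one_smul]
  calc ‖φ t - y‖ = (1 - t) * ‖(x - y) + ∫ s in (0:ℝ)..t, (1 - s)⁻¹ • ν s‖ := by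
        rw [hφt, norm_smul, Real.norm_of_nonneg h1t.le]
    _ ≤ (1 - t) * (‖x - y‖ + √((1 - t)⁻¹) * √M) := by
        gcongr
        refine (norm_add_le _ _).trans (add_le_add_right ?_ _)
        exact (norm_integral_inv_one_sub_smul_le ht0 ht1 hν).trans (by gcongr)
    _ = (1 - t) * ‖x - y‖ + √(M * (1 - t)) := by
        rw [mul_add, Real.sqrt_mul' _ h1t.le, Real.sqrt_inv]
        field_simp
        linear_combination (-√M) * Real.sq_sqrt h1t.le

end

theorem controlled_bridge_endpoint_estimate_general
    {d : ℕ} (x y : Euc d) (M : ℝ) (hM : 0 ≤ M)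
    (ν : ℝ → Euc d) (hν : MemLp ν 2 (volume.restrict (Set.Icc (0:ℝ) 1)))
    (hνM : (∫ s in (0:ℝ)..1, ‖ν s‖ ^ 2) ≤ M)
    (φ : ℝ → Euc d)
    (hint : ∀ t ∈ Set.Ico (0:ℝ) 1,
      IntervalIntegrable (fun s => (1 - s)⁻¹ • (y - φ s) + ν s) volume 0 t)
    (hφ : ∀ t ∈ Set.Ico (0:ℝ) 1,
      φ t = x + ∫ s in (0:ℝ)..t, ((1 - s)⁻¹ • (y - φ s) + ν s)) :
    (∀ t ∈ Set.Ico (0:ℝ) 1,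
        ‖φ t - y‖ ≤ (1 - t) * ‖x - y‖ + Real.sqrt (M * (1 - t))) ∧
    (∃ ψ : PathSp d,
      (∀ t : Set.Icc (0:ℝ) 1, (t : ℝ) < 1 → ψ t = φ t) ∧
      ψ ⟨1, Set.right_mem_Icc.mpr zero_le_one⟩ = y ∧
      ∀ δ ∈ Set.Ioc (0:ℝ) 1, ∀ t : Set.Icc (0:ℝ) 1, 1 - δ ≤ (t : ℝ) →
        ‖ψ t - y‖ ≤ δ * ‖x - y‖ + Real.sqrt (M * δ)) := by
  have hνt : ∀ t ∈ Ico (0:ℝ) 1, MemLp ν 2 (volume.restrict (Ioc 0 t)) := fun t ht =>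
    hν.mono_measure (Measure.restrict_mono
      (Ioc_subset_Icc_self.trans (Icc_subset_Icc le_rfl ht.2.le)) le_rfl)
  have hνMt : ∀ t ∈ Ico (0:ℝ) 1, ∫ s in (0:ℝ)..t, ‖ν s‖ ^ 2 ≤ M := fun t ht =>
    (intervalIntegral.integral_mono_interval le_rfl ht.1 ht.2.le
      (ae_of_all _ fun _ => by positivity) (IntegrableOn.intervalIntegrable
        (by rw [uIcc_of_le zero_le_one]; exact hν.norm.integrable_sq))).trans hνM
  have hbound : ∀ t ∈ Ico (0:ℝ) 1, ‖φ t - y‖ ≤ (1 - t) * ‖x - y‖ + √(M * (1 - t)) :=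
    fun t ht => norm_sub_le_of_bridge ht.1 ht.2 (hνt t ht) (hνMt t ht) (hint t ht)
      fun s hs => hφ s ⟨hs.1, hs.2.trans_lt ht.2⟩
  have hcont : ContinuousOn (Function.update φ 1 y) (Icc 0 1) :=
    continuousOn_update_Icc_of_tendsto
      ((continuousOn_const.add (intervalIntegral.continuousOn_primitive_Ico hint)).congr hφ)
      (tendsto_of_norm_sub_le_bridge_bound hbound)
  refine ⟨hbound, ⟨⟨_, hcont.domRestrict⟩, fun t ht => Function.update_of_ne ht.ne _ _,
    Function.update_self .., fun δ hδ t htδ => ?_⟩⟩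
  show ‖Function.update φ 1 y t - y‖ ≤ _
  rcases eq_or_lt_of_le t.2.2 with ht | ht
  · have hδ0 := hδ.1
    rw [ht, Function.update_self, sub_self, norm_zero]
    positivity
  · rw [Function.update_of_ne ht.ne]
    refine (hbound t ⟨t.2.1, ht⟩).trans ?_
    have : 1 - (t : ℝ) ≤ δ := by linarith
    gcongr

/-- the deterministic endpoint estimate for controlled Brownian bridge
dynamics: if `φ(t) = x + ∫₀ᵗ (−(φ(s)−y)/(1−s) + ν(s)) ds` on `[0,1)` with
`∫₀¹|ν|² ≤ M`, then `|φ(t) − y| ≤ (1−t)|x−y| + √(M(1−t))` for all `t ∈ [0,1)`;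
in particular `φ` extends to a continuous path on `[0,1]` with value `y` at `1`,
and `sup_{t∈[1−δ,1]} |φ(t) − y| ≤ δ|x−y| + √(Mδ)` for every `δ ∈ (0,1]`. -/
theorem controlled_bridge_endpoint_estimate
    {d : ℕ} (hd : 1 ≤ d) (x y : Euc d) (M : ℝ) (hM : 0 ≤ M)
    (ν : ℝ → Euc d) (hν : MemLp ν 2 (volume.restrict (Set.Icc (0:ℝ) 1)))
    (hνM : (∫ s in (0:ℝ)..1, ‖ν s‖ ^ 2) ≤ M)
    (φ : ℝ → Euc d)
    (hint : ∀ t ∈ Set.Ico (0:ℝ) 1,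
      IntervalIntegrable (fun s => (1 - s)⁻¹ • (y - φ s) + ν s) volume 0 t)
    (hφ : ∀ t ∈ Set.Ico (0:ℝ) 1,
      φ t = x + ∫ s in (0:ℝ)..t, ((1 - s)⁻¹ • (y - φ s) + ν s)) :
    (∀ t ∈ Set.Ico (0:ℝ) 1,
        ‖φ t - y‖ ≤ (1 - t) * ‖x - y‖ + Real.sqrt (M * (1 - t))) ∧
    (∃ ψ : PathSp d,
      (∀ t : Set.Icc (0:ℝ) 1, (t : ℝ) < 1 → ψ t = φ t) ∧
      ψ ⟨1, Set.right_mem_Icc.mpr zero_le_one⟩ = y ∧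
      ∀ δ ∈ Set.Ioc (0:ℝ) 1, ∀ t : Set.Icc (0:ℝ) 1, 1 - δ ≤ (t : ℝ) →
        ‖ψ t - y‖ ≤ δ * ‖x - y‖ + Real.sqrt (M * δ)) :=
  controlled_bridge_endpoint_estimate_general x y M hM ν hν hνM φ hint hφ

end
end

section
/- Let d ≥ 1, x, y ∈ ℝ^d, and let φ : [0,1] → ℝ^d be absolutely continuous with derivative φ' ∈ L²([0,1];ℝ^d), φ(0) = x and φ(1) = y. Define ν(t) := φ'(t) + (φ(t) − y)/(1 − t) for t ∈ [0,1). Then ν ∈ L²([0,1];ℝ^d) and (1/2)·∫₀¹ |ν(t)|² dt = (1/2)·∫₀¹ |φ'(t)|² dt − (1/2)·|x − y|². (The identification in Section 6.1 of the weak-convergence control rate with Kato's Brownian-bridge rate function.) -/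
open MeasureTheory Set

noncomputable section

/-!
Write `Φ = φ - y`. For `b < 1` the potential `h t = ‖Φ t‖² / (1 - t)` is absolutely continuous
on `[0, b]` and `h' = ‖ν‖² - ‖φ'‖²` almost everywhere, so
`∫₀ᵇ ‖ν‖² = ∫₀ᵇ ‖φ'‖² + h b - ‖x - y‖²`. Since `Φ b = -∫ᵦ¹ φ'`, Cauchy–Schwarz gives
`0 ≤ h b ≤ ∫ᵦ¹ ‖φ'‖²`, which tends to `0` as `b → 1`; as `‖ν‖² ≥ 0`, the identity passes to the
limit together with the integrability of `‖ν‖²`.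
-/

open Filter Topology
open scoped RealInnerProductSpace Interval

namespace AbsolutelyContinuousOnInterval

theorem of_dist_le_mul {X Y : Type*} [PseudoMetricSpace X] [PseudoMetricSpace Y]
    {f : ℝ → X} {F : ℝ → Y} {a b K : ℝ} (hF : AbsolutelyContinuousOnInterval F a b)
    (h : ∀ s ∈ uIcc a b, ∀ t ∈ uIcc a b, dist (f s) (f t) ≤ K * dist (F s) (F t)) :
    AbsolutelyContinuousOnInterval f a b := by
  unfold AbsolutelyContinuousOnInterval at hF ⊢
  refine squeeze_zero' (Eventually.of_forall fun _ => Finset.sum_nonneg fun _ _ => dist_nonneg)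
    ?_ (by simpa using hF.const_mul K)
  rw [eventually_inf_principal]
  filter_upwards with E hE
  rw [Finset.mul_sum]
  exact Finset.sum_le_sum fun i hi => h _ (hE.1 i hi).1 _ (hE.1 i hi).2

theorem norm_sq {E : Type*} [SeminormedAddCommGroup E] {f : ℝ → E} {a b : ℝ}
    (hf : AbsolutelyContinuousOnInterval f a b) :
    AbsolutelyContinuousOnInterval (‖f ·‖ ^ 2) a b := by
  obtain ⟨C, hC⟩ := hf.exists_bound
  refine hf.of_dist_le_mul (K := 2 * C) fun s hs t ht => ?_
  rw [Real.dist_eq, dist_eq_norm, sq_sub_sq, abs_mul, abs_of_nonneg (by positivity)]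
  have hC0 : 0 ≤ C := (norm_nonneg _).trans (hC s hs)
  gcongr
  · linarith [hC s hs, hC t ht]
  · exact abs_norm_sub_norm_le _ _

end AbsolutelyContinuousOnInterval

section Primitive

variable {E : Type*} [NormedAddCommGroup E] [NormedSpace ℝ E] {f : ℝ → E} {a b : ℝ}

theorem IntervalIntegrable.absolutelyContinuousOnInterval_const_add_intervalIntegral
    (hf : IntervalIntegrable f volume a b) (x : E) :
    AbsolutelyContinuousOnInterval (fun t => x + ∫ s in a..t, f s) a b := by
  refine (hf.norm.absolutelyContinuousOnInterval_intervalIntegral left_mem_uIcc).of_dist_le_mul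
    (K := 1) fun s hs t ht => ?_
  have hfs := hf.mono_set (uIcc_subset_uIcc left_mem_uIcc hs)
  have hft := hf.mono_set (uIcc_subset_uIcc left_mem_uIcc ht)
  rw [dist_add_left, one_mul, dist_eq_norm, Real.dist_eq,
    intervalIntegral.integral_interval_sub_left hfs hft,
    intervalIntegral.integral_interval_sub_left hfs.norm hft.norm]
  exact intervalIntegral.norm_integral_le_abs_integral_norm

theorem IntervalIntegrable.tendsto_intervalIntegral_nhdsLT (hab : a < b)
    (hf : IntervalIntegrable f volume a b) :
    Tendsto (fun c => ∫ t in a..c, f t) (𝓝[<] b) (𝓝 (∫ t in a..b, f t)) := by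
  rw [← nhdsWithin_Ioo_eq_nhdsLT hab]
  exact ((intervalIntegral.continuousOn_primitive_interval' hf left_mem_uIcc) b
    right_mem_uIcc).mono (Ioo_subset_Icc_self.trans Icc_subset_uIcc)

end Primitive

theorem intervalIntegrable_and_integral_eq_of_nonneg_of_tendsto_nhdsLT {f : ℝ → ℝ} {a c L : ℝ}
    (hac : a < c) (hf : ∀ t, 0 ≤ f t) (hfi : ∀ b ∈ Ico a c, IntervalIntegrable f volume a b)
    (hL : Tendsto (fun b => ∫ t in a..b, f t) (𝓝[<] c) (𝓝 L)) :
    IntervalIntegrable f volume a c ∧ ∫ t in a..c, f t = L := by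
  obtain ⟨u, -, hu, hu_lim⟩ := exists_seq_strictMono_tendsto' hac
  have hu' : Tendsto u atTop (𝓝[<] c) :=
    tendsto_nhdsWithin_iff.2 ⟨hu_lim, Eventually.of_forall fun n => (hu n).2⟩
  have hfc : IntervalIntegrable f volume a c := by
    rw [intervalIntegrable_iff_integrableOn_Ioc_of_le hac.le]
    refine integrableOn_Ioc_of_intervalIntegral_norm_bounded_right (I := L + 1)
      (fun n => (hfi (u n) ⟨(hu n).1.le, (hu n).2⟩).1) hu_lim ?_
    filter_upwards [(hL.comp hu').eventually (eventually_lt_nhds (lt_add_one L))] with n hn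
    simp only [Function.comp_apply, intervalIntegral.integral_of_le (hu n).1.le] at hn
    simpa only [Real.norm_of_nonneg (hf _)] using hn.le
  exact ⟨hfc, tendsto_nhds_unique (hfc.tendsto_intervalIntegral_nhdsLT hac) hL⟩

section InnerProductSpace

variable {E : Type*} [NormedAddCommGroup E] [InnerProductSpace ℝ E]

theorem HasDerivAt.norm_sq_mul_inv_const_sub {Φ : ℝ → E} {v : E} {t T : ℝ}
    (hΦ : HasDerivAt Φ v t) (ht : t ≠ T) :
    HasDerivAt (fun s => ‖Φ s‖ ^ 2 * (T - s)⁻¹) (‖v + (T - t)⁻¹ • Φ t‖ ^ 2 - ‖v‖ ^ 2) t := by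
  have hT : T - t ≠ 0 := sub_ne_zero.2 ht.symm
  refine (hΦ.norm_sq.mul (((hasDerivAt_id t).const_sub T).inv hT)).congr_deriv ?_
  rw [norm_add_sq_real, inner_smul_right, norm_smul, Real.norm_eq_abs, mul_pow, sq_abs,
    real_inner_comm]
  simp only [id, Pi.inv_apply]
  field_simp
  ring

variable [CompleteSpace E]

theorem norm_intervalIntegral_sq_le {g : ℝ → E} {a b : ℝ} (hab : a ≤ b)
    (hg : IntervalIntegrable g volume a b) (hg2 : IntervalIntegrable (‖g ·‖ ^ 2) volume a b) :
    ‖∫ t in a..b, g t‖ ^ 2 ≤ (b - a) * ∫ t in a..b, ‖g t‖ ^ 2 := by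
  rcases hab.eq_or_lt with rfl | hlt
  · simp
  set m := ∫ t in a..b, g t
  have hL : 0 < b - a := sub_pos.2 hlt
  -- integrating this pointwise AM-GM bound gives the claim, since `∫ ⟪m, g⟫ = ‖m‖ ^ 2`
  have h_pt : ∀ t, 2 * ⟪m, g t⟫ ≤ (b - a)⁻¹ * ‖m‖ ^ 2 + (b - a) * ‖g t‖ ^ 2 := fun t => by
    have h := norm_sub_sq_real m ((b - a) • g t)
    rw [inner_smul_right, norm_smul, Real.norm_of_nonneg hL.le, mul_pow] at h
    have : (b - a)⁻¹ * ‖m - (b - a) • g t‖ ^ 2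
        = (b - a)⁻¹ * ‖m‖ ^ 2 + (b - a) * ‖g t‖ ^ 2 - 2 * ⟪m, g t⟫ := by
      rw [h]; field_simp; ring
    nlinarith [mul_nonneg (inv_nonneg.2 hL.le) (sq_nonneg ‖m - (b - a) • g t‖)]
  have h_inner : IntervalIntegrable (fun t => ⟪m, g t⟫) volume a b :=
    ⟨hg.1.const_inner m, hg.2.const_inner m⟩
  have h_int : ∫ t in a..b, ⟪m, g t⟫ = ‖m‖ ^ 2 := by
    rw [← real_inner_self_eq_norm_sq]
    exact (innerSL ℝ m).intervalIntegral_comp_comm hg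
  have h_mono := intervalIntegral.integral_mono_on hab (h_inner.const_mul 2)
    (intervalIntegrable_const.add (hg2.const_mul (b - a))) fun t _ => h_pt t
  rw [intervalIntegral.integral_const_mul, intervalIntegral.integral_add intervalIntegrable_const
    (hg2.const_mul _), intervalIntegral.integral_const, intervalIntegral.integral_const_mul,
    h_int, smul_eq_mul] at h_mono
  field_simp at h_mono
  linarith

theorem intervalIntegrable_and_integral_norm_add_inv_smul_sq {g φ : ℝ → E} {x y : E} {a b T : ℝ}
    (hab : a ≤ b) (hbT : b < T) (hg : IntervalIntegrable g volume a b)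
    (hg2 : IntervalIntegrable (‖g ·‖ ^ 2) volume a b)
    (hφ : EqOn φ (fun t => x + ∫ s in a..t, g s) (uIcc a b)) :
    IntervalIntegrable (fun t => ‖g t + (T - t)⁻¹ • (φ t - y)‖ ^ 2) volume a b ∧
      ∫ t in a..b, ‖g t + (T - t)⁻¹ • (φ t - y)‖ ^ 2
        = (∫ t in a..b, ‖g t‖ ^ 2) + ‖φ b - y‖ ^ 2 * (T - b)⁻¹ - ‖x - y‖ ^ 2 * (T - a)⁻¹ := by
  set h : ℝ → ℝ := fun t => ‖x - y + ∫ s in a..t, g s‖ ^ 2 * (T - t)⁻¹ with h_def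
  have hT : ∀ t ∈ uIcc a b, T - t ≠ 0 := fun t ht =>
    (sub_pos.2 (((uIcc_of_le hab ▸ ht).2).trans_lt hbT)).ne'
  have h_ac : AbsolutelyContinuousOnInterval h a b :=
    (hg.absolutelyContinuousOnInterval_const_add_intervalIntegral (x - y)).norm_sq.mul
      ((contDiffOn_const.sub contDiffOn_id).inv hT).absolutelyContinuousOnInterval
  have h_deriv : ∀ᵐ t, t ∈ Ι a b →
      ‖g t + (T - t)⁻¹ • (φ t - y)‖ ^ 2 = ‖g t‖ ^ 2 + deriv h t := by
    filter_upwards [hg.ae_hasDerivAt_integral] with t hgt ht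
    replace ht := uIoc_subset_uIcc ht
    have hφt : φ t - y = x - y + ∫ s in a..t, g s := by rw [hφ ht, add_sub_right_comm]
    rw [(((hgt ht a left_mem_uIcc).const_add (x - y)).norm_sq_mul_inv_const_sub
      (sub_ne_zero.1 (hT t ht)).symm).deriv, hφt]
    ring
  refine ⟨(hg2.add h_ac.intervalIntegrable_deriv).congr_ae
    (EventuallyEq.symm ((ae_restrict_iff' measurableSet_uIoc).2 h_deriv)), ?_⟩
  rw [intervalIntegral.integral_congr_ae h_deriv, intervalIntegral.integral_add hg2
    h_ac.intervalIntegrable_deriv, h_ac.integral_deriv_eq_sub]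
  have hφb : φ b - y = x - y + ∫ s in a..b, g s := by
    rw [hφ right_mem_uIcc, add_sub_right_comm]
  simp only [h_def, intervalIntegral.integral_same, add_zero, hφb]
  ring

theorem tendsto_norm_sub_sq_mul_inv_nhdsLT {g φ : ℝ → E} {x y : E} {a T : ℝ} (haT : a < T)
    (hg : IntervalIntegrable g volume a T) (hg2 : IntervalIntegrable (‖g ·‖ ^ 2) volume a T)
    (hφ : EqOn φ (fun t => x + ∫ s in a..t, g s) (uIcc a T)) (hy : φ T = y) :
    Tendsto (fun b => ‖φ b - y‖ ^ 2 * (T - b)⁻¹) (𝓝[<] T) (𝓝 0) := by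
  have h_tail : Tendsto (fun b => (∫ t in a..T, ‖g t‖ ^ 2) - ∫ t in a..b, ‖g t‖ ^ 2)
      (𝓝[<] T) (𝓝 0) := by
    have := (hg2.tendsto_intervalIntegral_nhdsLT haT).const_sub (∫ t in a..T, ‖g t‖ ^ 2)
    rwa [sub_self] at this
  refine squeeze_zero' ?_ ?_ h_tail
  · filter_upwards [self_mem_nhdsWithin] with b (hb : b < T)
    exact mul_nonneg (sq_nonneg _) (inv_nonneg.2 (sub_pos.2 hb).le)
  · filter_upwards [Ioo_mem_nhdsLT haT] with b hb
    have hab := uIcc_subset_uIcc left_mem_uIcc (Icc_subset_uIcc (Ioo_subset_Icc_self hb))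
    have hyb : y - φ b = ∫ t in b..T, g t := by
      rw [← hy, hφ right_mem_uIcc, hφ (hab right_mem_uIcc), add_sub_add_left_eq_sub,
        intervalIntegral.integral_interval_sub_left hg (hg.mono_set hab)]
    rw [intervalIntegral.integral_interval_sub_left hg2 (hg2.mono_set hab), norm_sub_rev, hyb,
      ← div_eq_mul_inv, div_le_iff₀' (sub_pos.2 hb.2)]
    have hbT := uIcc_subset_uIcc (hab right_mem_uIcc) right_mem_uIcc
    exact norm_intervalIntegral_sq_le hb.2.le (hg.mono_set hbT) (hg2.mono_set hbT)

theorem intervalIntegrable_and_integral_norm_add_inv_smul_sq_of_endpoint {g φ : ℝ → E}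
    {x y : E} {a T : ℝ} (haT : a < T) (hg : IntervalIntegrable g volume a T)
    (hg2 : IntervalIntegrable (‖g ·‖ ^ 2) volume a T)
    (hφ : EqOn φ (fun t => x + ∫ s in a..t, g s) (uIcc a T)) (hy : φ T = y) :
    IntervalIntegrable (fun t => ‖g t + (T - t)⁻¹ • (φ t - y)‖ ^ 2) volume a T ∧
      ∫ t in a..T, ‖g t + (T - t)⁻¹ • (φ t - y)‖ ^ 2
        = (∫ t in a..T, ‖g t‖ ^ 2) - ‖x - y‖ ^ 2 * (T - a)⁻¹ := by
  have h_energy (b : ℝ) (hb : b ∈ Ico a T) := by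
    have hsub : uIcc a b ⊆ uIcc a T :=
      uIcc_subset_uIcc left_mem_uIcc (Icc_subset_uIcc (Ico_subset_Icc_self hb))
    exact intervalIntegrable_and_integral_norm_add_inv_smul_sq (y := y) hb.1 hb.2
      (hg.mono_set hsub) (hg2.mono_set hsub) (hφ.mono hsub)
  refine intervalIntegrable_and_integral_eq_of_nonneg_of_tendsto_nhdsLT haT
    (fun t => sq_nonneg _) (fun b hb => (h_energy b hb).1) ?_
  have h_lim := ((hg2.tendsto_intervalIntegral_nhdsLT haT).add
    (tendsto_norm_sub_sq_mul_inv_nhdsLT haT hg hg2 hφ hy)).sub_const (‖x - y‖ ^ 2 * (T - a)⁻¹)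
  rw [add_zero] at h_lim
  refine h_lim.congr' ?_
  filter_upwards [Ioo_mem_nhdsLT haT] with b hb
  exact (h_energy b (Ioo_subset_Ico_self hb)).2.symm

end InnerProductSpace

theorem bridge_control_energy_identity_general
    {d : ℕ} (x y : Euc d) (φ g : ℝ → Euc d)
    (hg : MemLp g 2 (volume.restrict (Set.Icc (0:ℝ) 1)))
    (hφ : ∀ t ∈ Set.Icc (0:ℝ) 1, φ t = x + ∫ s in (0:ℝ)..t, g s)
    (hy : φ 1 = y) :
    MemLp (fun t => g t + (1 - t)⁻¹ • (φ t - y)) 2 (volume.restrict (Set.Icc (0:ℝ) 1)) ∧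
    (1 / 2) * (∫ t in (0:ℝ)..1, ‖g t + (1 - t)⁻¹ • (φ t - y)‖ ^ 2)
      = (1 / 2) * (∫ t in (0:ℝ)..1, ‖g t‖ ^ 2) - (1 / 2) * ‖x - y‖ ^ 2 := by
  have hg1 : IntervalIntegrable g volume 0 1 :=
    (intervalIntegrable_iff_integrableOn_Icc_of_le zero_le_one).2 (hg.integrable one_le_two)
  have hg2 : IntervalIntegrable (‖g ·‖ ^ 2) volume 0 1 :=
    (intervalIntegrable_iff_integrableOn_Icc_of_le zero_le_one).2
      (hg.integrable_norm_pow' (p := 2))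
  have hφ' : EqOn φ (fun t => x + ∫ s in (0:ℝ)..t, g s) (uIcc 0 1) := fun t ht =>
    hφ t (by rwa [uIcc_of_le zero_le_one] at ht)
  obtain ⟨hν, hν_eq⟩ :=
    intervalIntegrable_and_integral_norm_add_inv_smul_sq_of_endpoint one_pos hg1 hg2 hφ' hy
  refine ⟨?_, by rw [hν_eq]; ring⟩
  have hφ_cont : ContinuousOn φ (uIcc 0 1) :=
    (hg1.absolutelyContinuousOnInterval_const_add_intervalIntegral x).continuousOn.congr hφ'
  rw [uIcc_of_le zero_le_one] at hφ_cont
  refine (memLp_two_iff_integrable_sq_norm ?_).2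
    ((intervalIntegrable_iff_integrableOn_Icc_of_le zero_le_one).1 hν)
  exact hg.1.add ((measurable_const.sub measurable_id).inv.aestronglyMeasurable.smul
    ((hφ_cont.aestronglyMeasurable measurableSet_Icc).sub aestronglyMeasurable_const))

/-- if `φ : [0,1] → ℝ^d` is absolutely continuous with derivative
`g = φ' ∈ L²([0,1];ℝ^d)`, `φ(0) = x`, `φ(1) = y`, and
`ν(t) := φ'(t) + (φ(t) − y)/(1 − t)`, then `ν ∈ L²([0,1];ℝ^d)` and
`½∫₀¹|ν|² = ½∫₀¹|φ'|² − ½|x−y|²`. -/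
theorem bridge_control_energy_identity
    {d : ℕ} (hd : 1 ≤ d) (x y : Euc d) (φ g : ℝ → Euc d)
    (hg : MemLp g 2 (volume.restrict (Set.Icc (0:ℝ) 1)))
    (hφ : ∀ t ∈ Set.Icc (0:ℝ) 1, φ t = x + ∫ s in (0:ℝ)..t, g s)
    (hy : φ 1 = y) :
    MemLp (fun t => g t + (1 - t)⁻¹ • (φ t - y)) 2 (volume.restrict (Set.Icc (0:ℝ) 1)) ∧
    (1 / 2) * (∫ t in (0:ℝ)..1, ‖g t + (1 - t)⁻¹ • (φ t - y)‖ ^ 2)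
      = (1 / 2) * (∫ t in (0:ℝ)..1, ‖g t‖ ^ 2) - (1 / 2) * ‖x - y‖ ^ 2 :=
  bridge_control_energy_identity_general x y φ g hg hφ hy
end
end

section
/- Let d ≥ 1 and let W be a standard d-dimensional Brownian motion on [0,1] with W₀ = 0. For every δ ∈ (0, 1/2] and ξ > 0, P( there exist s, t ∈ [0,1] with |t − s| ≤ δ and |W_t − W_s| ≥ ξ ) ≤ (4d/δ)·exp( −ξ² / (256·d·δ) ). (The mesh-based modulus-of-continuity tail estimate of Section 3.1, eq. (mesh), in the Brownian case.) -/
open MeasureTheory ProbabilityTheory Set Filter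

noncomputable section

instance (d : ℕ) : MeasurableSpace (PathSp d) := borel _
instance (d : ℕ) : BorelSpace (PathSp d) := ⟨rfl⟩

/-- Standard d-dimensional Brownian motion with `W₀ = 0` and continuous sample paths:
increments are Gaussian (every one-dimensional projection `⟪u, W_t − W_s⟫` has law
`N(0, ‖u‖²(t−s))`) and independent. -/
structure IsBrownianMotion {Ω : Type*} [MeasurableSpace Ω] (P : Measure Ω) {d : ℕ}
    (W : ℝ → Ω → Euc d) : Prop where
  isProb : IsProbabilityMeasure P
  init : ∀ ω, W 0 ω = 0
  cont : ∀ ω, Continuous fun t => W t ω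
  meas : ∀ t, Measurable (W t)
  gauss : ∀ s t : ℝ, 0 ≤ s → s ≤ t → ∀ u : Euc d,
    P.map (fun ω => (inner ℝ u (W t ω - W s ω) : ℝ))
      = gaussianReal 0 ((‖u‖ ^ 2 * (t - s)).toNNReal)
  indep : ∀ n : ℕ, ∀ ts : ℕ → ℝ, Monotone ts → 0 ≤ ts 0 →
    iIndepFun
      (fun i : Fin n => fun ω => W (ts (i + 1)) ω - W (ts i) ω) P

/-- The √η-scaled Brownian bridge from `x` to `y` built from the path `w`:
`t ↦ x + √η (w_t − t w_1) + t (y − x)`. -/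
def bridgePath {d : ℕ} (η : ℝ) (x y : Euc d) (w : ℝ → Euc d) (hw : Continuous w) :
    PathSp d :=
  ⟨fun t => x + Real.sqrt η • (w t - (t : ℝ) • w 1) + (t : ℝ) • (y - x), by
    have h1 : Continuous fun t : Set.Icc (0:ℝ) 1 => (t : ℝ) := continuous_subtype_val
    fun_prop⟩

/-- `φ ∈ C₁` is absolutely continuous with derivative `g ∈ L²([0,1];ℝ^d)`, starts at `x`
and ends at `y`. -/
def IsBridgeDeriv {d : ℕ} (x y : Euc d) (φ : PathSp d) (g : ℝ → Euc d) : Prop :=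
  MemLp g 2 (volume.restrict (Set.Icc (0:ℝ) 1)) ∧
  (∀ t : Set.Icc (0:ℝ) 1, φ t = x + ∫ s in (0:ℝ)..(t : ℝ), g s) ∧
  φ ⟨1, Set.right_mem_Icc.mpr zero_le_one⟩ = y

/-!
Cover `[0, 1]` by the overlapping windows `[jδ, jδ + 2δ]`, `j ≤ ⌊1/δ⌋`: a pair `s ≤ t` with
`t - s ≤ δ` lies in the window starting at `⌊s/δ⌋δ`, so by the triangle inequality an oscillation
`ξ` forces an excursion of size more than `ξ/4` from the left endpoint of that window. By path
continuity such an excursion is already seen on a fine dyadic grid. Along a grid, each coordinate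
direction `±eᵢ` gives a Gaussian random walk, whose exponential `exp (λ⟪u, W t - W a⟫)` is a
submartingale; Doob's maximal inequality with `λ = c / h` bounds its excursions above `c / √d` on a
window of length `h` by `exp (-c² / (2dh))`. Summing over the `2d` directions and the at most `2/δ`
windows gives the estimate.
-/

open scoped NNReal ENNReal RealInnerProductSpace
open Real Finset Topology

section ExpSubmartingale

variable {Ω : Type*} {m0 : MeasurableSpace Ω} {μ : Measure Ω} [IsFiniteMeasure μ]

theorem submartingale_exp_mul_of_indep {ι : Type*} [Preorder ι] {ℱ : Filtration ι m0}
    {S : ι → Ω → ℝ} (hS : StronglyAdapted ℱ S) {l : ℝ}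
    (hint : ∀ i, Integrable (fun ω => exp (l * S i ω)) μ)
    (hindep : ∀ i j, i ≤ j →
      Indep (ℱ i) (MeasurableSpace.comap (fun ω => S j ω - S i ω) inferInstance) μ)
    (hmgf : ∀ i j, i ≤ j → 1 ≤ ∫ ω, exp (l * (S j ω - S i ω)) ∂μ) :
    Submartingale (fun i ω => exp (l * S i ω)) ℱ μ := by
  refine submartingale_of_setIntegral_le
    (fun i => (continuous_exp.comp_stronglyMeasurable ((hS i).const_mul l))) hint
    fun i j hij s hs => ?_
  set X := s.indicator fun ω => exp (l * S i ω)
  have hX : Measurable[ℱ i] X :=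
    (measurable_exp.comp ((hS i).measurable.const_mul l)).indicator hs
  have hD : Measurable[MeasurableSpace.comap (fun ω => S j ω - S i ω) inferInstance]
      fun ω => exp (l * (S j ω - S i ω)) :=
    (measurable_exp.comp (measurable_const_mul l)).comp (comap_measurable _)
  have hXD : IndepFun X (fun ω => exp (l * (S j ω - S i ω))) μ :=
    (IndepFun_iff_Indep _ _ _).2 (indep_of_indep_of_le_right
      (indep_of_indep_of_le_left (hindep i j hij) hX.comap_le) hD.comap_le)
  calc ∫ ω in s, exp (l * S i ω) ∂μ = ∫ ω, X ω ∂μ := (integral_indicator (ℱ.le i s hs)).symm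
    _ ≤ (∫ ω, X ω ∂μ) * ∫ ω, exp (l * (S j ω - S i ω)) ∂μ :=
      le_mul_of_one_le_right
        (integral_nonneg fun ω => indicator_nonneg (fun _ _ => (exp_pos _).le) ω) (hmgf i j hij)
    _ = ∫ ω, X ω * exp (l * (S j ω - S i ω)) ∂μ :=
      (hXD.integral_fun_mul_eq_mul_integral (hX.mono (ℱ.le i) le_rfl).aestronglyMeasurable
        (measurable_exp.comp ((((hS j).mono (ℱ.le j)).measurable.sub
          ((hS i).mono (ℱ.le i)).measurable).const_mul l)).aestronglyMeasurable).symm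
    _ = ∫ ω in s, exp (l * S j ω) ∂μ := by
      rw [← integral_indicator (ℱ.le i s hs)]
      congr 1 with ω
      by_cases hω : ω ∈ s
      · simp only [X, indicator_of_mem hω, ← exp_add]
        ring_nf
      · simp only [X, indicator_of_notMem hω, zero_mul]

theorem measure_exists_ge_le_of_submartingale_exp {ℱ : Filtration ℕ m0} {S : ℕ → Ω → ℝ} {l : ℝ}
    (hsub : Submartingale (fun n ω => exp (l * S n ω)) ℱ μ) (hl : 0 ≤ l) (c : ℝ) (n : ℕ) :
    μ {ω | ∃ k ≤ n, c ≤ S k ω} ≤ ENNReal.ofReal (exp (-(l * c)) * ∫ ω, exp (l * S n ω) ∂μ) := by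
  set ε : ℝ≥0 := ⟨exp (l * c), (exp_pos _).le⟩
  set M : Ω → ℝ := fun ω => (range (n + 1)).sup' nonempty_range_add_one fun k => exp (l * S k ω)
  have hsub_set : {ω | ∃ k ≤ n, c ≤ S k ω} ⊆ {ω | (ε : ℝ) ≤ M ω} := by
    rintro ω ⟨k, hkn, hk⟩
    exact (exp_le_exp.2 (mul_le_mul_of_nonneg_left hk hl)).trans
      (le_sup' (fun k => exp (l * S k ω)) (mem_range_succ_iff.2 hkn))
  have hmax : (ε : ℝ≥0∞) * μ {ω | (ε : ℝ) ≤ M ω} ≤ ENNReal.ofReal (∫ ω, exp (l * S n ω) ∂μ) :=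
    (maximal_ineq hsub (fun k ω => (exp_pos _).le) n).trans (ENNReal.ofReal_le_ofReal
      (setIntegral_le_integral (hsub.integrable n) (Eventually.of_forall fun ω => (exp_pos _).le)))
  have hε : (ε : ℝ≥0∞) = ENNReal.ofReal (exp (l * c)) := (ENNReal.ofReal_eq_coe_nnreal _).symm
  calc μ {ω | ∃ k ≤ n, c ≤ S k ω} ≤ μ {ω | (ε : ℝ) ≤ M ω} := measure_mono hsub_set
    _ = ENNReal.ofReal (exp (-(l * c))) * (ε * μ {ω | (ε : ℝ) ≤ M ω}) := by
      rw [hε, ← mul_assoc, ← ENNReal.ofReal_mul (exp_pos _).le, ← exp_add, neg_add_cancel,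
        exp_zero, ENNReal.ofReal_one, one_mul]
    _ ≤ ENNReal.ofReal (exp (-(l * c))) * ENNReal.ofReal (∫ ω, exp (l * S n ω) ∂μ) := by gcongr
    _ = _ := (ENNReal.ofReal_mul (exp_pos _).le).symm

end ExpSubmartingale

section RandomWalk

variable {Ω : Type*} {m0 : MeasurableSpace Ω} {μ : Measure Ω} {ξ : ℕ → Ω → ℝ}

theorem indep_iSup_comap_sum_range_comap_sum_Ico (hξ : ∀ n, iIndepFun (fun m : Fin n => ξ m) μ)
    (hmeas : ∀ m, Measurable (ξ m)) {i j : ℕ} (hij : i ≤ j) :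
    Indep (⨆ k ≤ i, MeasurableSpace.comap (fun ω => ∑ m ∈ range k, ξ m ω) inferInstance)
      (MeasurableSpace.comap (fun ω => ∑ m ∈ Ico i j, ξ m ω) inferInstance) μ := by
  set A : Finset (Fin j) := univ.filter fun m => (m : ℕ) < i
  set B : Finset (Fin j) := univ.filter fun m => i ≤ (m : ℕ)
  have hAB : Disjoint A B := disjoint_filter.2 fun m _ h => not_le.2 h
  have hindep := (IndepFun_iff_Indep _ _ _).1 ((hξ j).indepFun_finset A B hAB fun m => hmeas m)
  refine indep_of_indep_of_le_right (indep_of_indep_of_le_left hindep (iSup₂_le fun k hk => ?_)) ?_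
  · refine Measurable.comap_le (Finset.measurable_sum _ fun m hm => ?_)
    have hmi : m < i := (mem_range.1 hm).trans_le hk
    exact (measurable_pi_apply (⟨⟨m, by omega⟩, by simp [A, hmi]⟩ : A)).comp
      (comap_measurable fun ω (m : A) => ξ m ω)
  · refine Measurable.comap_le (Finset.measurable_sum _ fun m hm => ?_)
    obtain ⟨him, hmj⟩ := mem_Ico.1 hm
    exact (measurable_pi_apply (⟨⟨m, hmj⟩, by simp [B, him]⟩ : B)).comp
      (comap_measurable fun ω (m : B) => ξ m ω)

theorem measure_exists_sum_range_ge_le [IsFiniteMeasure μ]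
    (hξ : ∀ n, iIndepFun (fun m : Fin n => ξ m) μ) (hmeas : ∀ m, Measurable (ξ m)) {l : ℝ}
    (hl : 0 ≤ l) (hmgf : ∀ i j, i ≤ j → 1 ≤ mgf (fun ω => ∑ m ∈ Ico i j, ξ m ω) μ l)
    (c : ℝ) (n : ℕ) :
    μ {ω | ∃ k ≤ n, c ≤ ∑ m ∈ range k, ξ m ω}
      ≤ ENNReal.ofReal (exp (-(l * c)) * mgf (fun ω => ∑ m ∈ range n, ξ m ω) μ l) := by
  set S : ℕ → Ω → ℝ := fun k ω => ∑ m ∈ range k, ξ m ω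
  have hSm : ∀ k, StronglyMeasurable (S k) :=
    fun k => (Finset.measurable_sum _ fun m _ => hmeas m).stronglyMeasurable
  have hIco : ∀ i j, i ≤ j → (fun ω => S j ω - S i ω) = fun ω => ∑ m ∈ Ico i j, ξ m ω :=
    fun i j hij => funext fun ω => (sum_Ico_eq_sub _ hij).symm
  -- `1 ≤ mgf` forces integrability: the integral of a non-integrable function is `0`.
  have hint : ∀ k, Integrable (fun ω => exp (l * S k ω)) μ := fun k => by
    have h := hmgf 0 k (Nat.zero_le k)
    rw [← range_eq_Ico] at h
    exact Integrable.of_integral_ne_zero (zero_lt_one.trans_le h).ne'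
  have hsub : Submartingale (fun k ω => exp (l * S k ω)) (Filtration.natural S hSm) μ := by
    refine submartingale_exp_mul_of_indep (Filtration.stronglyAdapted_natural hSm) hint
      (fun i j hij => ?_) (fun i j hij => ?_)
    · have h := indep_iSup_comap_sum_range_comap_sum_Ico hξ hmeas hij
      rw [← hIco i j hij] at h
      exact h
    · have h := hmgf i j hij
      rw [← hIco i j hij] at h
      exact h
  exact measure_exists_ge_le_of_submartingale_exp hsub hl c n

end RandomWalk

theorem EuclideanSpace.exists_norm_le_sqrt_card_mul_abs {ι : Type*} [Fintype ι]
    {v : EuclideanSpace ℝ ι} (hv : v ≠ 0) : ∃ i, ‖v‖ ≤ √(Fintype.card ι) * |v i| := by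
  have : Nonempty ι := by
    by_contra h
    have : IsEmpty ι := not_nonempty_iff.1 h
    exact hv (Subsingleton.elim v 0)
  obtain ⟨i, hi⟩ := Finite.exists_max fun i => |v i|
  refine ⟨i, ?_⟩
  calc ‖v‖ = √(∑ j, ‖v j‖ ^ 2) := EuclideanSpace.norm_eq v
    _ ≤ √(∑ _j : ι, |v i| ^ 2) := by
      gcongr with j
      exact hi j
    _ = √(Fintype.card ι) * |v i| := by
      rw [sum_const, card_univ, nsmul_eq_mul, Real.sqrt_mul (Nat.cast_nonneg _),
        Real.sqrt_sq (abs_nonneg _)]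

theorem exists_dyadic_lt_of_lt {f : ℝ → ℝ} (hf : Continuous f) {a h u c : ℝ} (hh : 0 < h)
    (hu : u ∈ Icc a (a + h)) (hc : c < f u) :
    ∃ m k : ℕ, k ≤ 2 ^ m ∧ c < f (a + h * k / 2 ^ m) := by
  set x := (u - a) / h
  have hx0 : 0 ≤ x := div_nonneg (sub_nonneg.2 hu.1) hh.le
  have hx1 : x ≤ 1 := (div_le_one hh).2 (by linarith [hu.2])
  have hlim : Tendsto (fun m : ℕ => a + h * (⌊x * 2 ^ m⌋₊ : ℝ) / 2 ^ m) atTop (𝓝 u) := by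
    have hfloor := (tendsto_nat_floor_mul_div_atTop hx0).comp
      (tendsto_pow_atTop_atTop_of_one_lt (one_lt_two (α := ℝ)))
    convert (hfloor.const_mul h).const_add a using 2 with m
    · simp [mul_div_assoc]
    · rw [mul_div_cancel₀ _ hh.ne']
      ring
  obtain ⟨m, hm⟩ := (((hf.tendsto u).comp hlim).eventually (lt_mem_nhds hc)).exists
  refine ⟨m, ⌊x * 2 ^ m⌋₊, Nat.floor_le_of_le ?_, hm⟩
  push_cast
  nlinarith [pow_pos (two_pos (α := ℝ)) m]

theorem exists_Icc_lt_norm_sub_of_le_norm_sub {E : Type*} [SeminormedAddCommGroup E] {f : ℝ → E}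
    {δ ξ s t : ℝ} (hδ : 0 < δ) (hξ : 0 < ξ) (hs : s ∈ Icc (0 : ℝ) 1) (ht : t ∈ Icc (0 : ℝ) 1)
    (hst : |t - s| ≤ δ) (hf : ξ ≤ ‖f t - f s‖) :
    ∃ j ≤ ⌊1 / δ⌋₊, ∃ u ∈ Icc (j * δ) (j * δ + 2 * δ), ξ / 4 < ‖f u - f (j * δ)‖ := by
  wlog hle : s ≤ t generalizing s t
  · exact this ht hs (by rwa [abs_sub_comm]) (by rwa [norm_sub_rev]) (le_of_not_ge hle)
  set j := ⌊s / δ⌋₊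
  have hjs : (j : ℝ) * δ ≤ s := (le_div_iff₀ hδ).1 (Nat.floor_le (div_nonneg hs.1 hδ.le))
  have hsj : s < (j : ℝ) * δ + δ := by
    have := (div_lt_iff₀ hδ).1 (Nat.lt_floor_add_one (s / δ))
    linarith
  have hts : t - s ≤ δ := (le_abs_self _).trans hst
  refine ⟨j, Nat.floor_le_floor (div_le_div_of_nonneg_right hs.2 hδ.le), ?_⟩
  have htri := norm_sub_le_norm_sub_add_norm_sub (f t) (f (j * δ)) (f s)
  rw [norm_sub_rev (f (j * δ))] at htri
  by_cases htj : ξ / 2 ≤ ‖f t - f (j * δ)‖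
  · exact ⟨t, ⟨hjs.trans hle, by linarith⟩, by linarith⟩
  · exact ⟨s, ⟨hjs, by linarith⟩, by linarith⟩

theorem natFloor_one_div_add_one_le {δ : ℝ} (hδ : 0 < δ) (hδ1 : δ ≤ 1) :
    (⌊1 / δ⌋₊ + 1 : ℝ) ≤ 2 / δ := by
  have hfloor := Nat.floor_le (one_div_pos.2 hδ).le
  have hone : 1 ≤ 1 / δ := (le_div_iff₀ hδ).2 (by linarith)
  linarith [show 2 / δ = 1 / δ + 1 / δ by ring]

namespace IsBrownianMotion

variable {d : ℕ} {Ω : Type*} [MeasurableSpace Ω] {P : Measure Ω} {W : ℝ → Ω → Euc d}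

theorem mgf_inner_sub (hW : IsBrownianMotion P W) {s t : ℝ} (hs : 0 ≤ s) (hst : s ≤ t)
    {u : Euc d} (hu : ‖u‖ = 1) (l : ℝ) :
    mgf (fun ω => ⟪u, W t ω - W s ω⟫) P l = exp ((t - s) * l ^ 2 / 2) := by
  rw [mgf_gaussianReal (hW.gauss s t hs hst u) l, hu, one_pow, one_mul,
    Real.coe_toNNReal _ (sub_nonneg.2 hst), zero_mul, zero_add]

theorem measure_exists_inner_ge_le (hW : IsBrownianMotion P W) {t : ℕ → ℝ} (ht : Monotone t)
    (ht0 : 0 ≤ t 0) {u : Euc d} (hu : ‖u‖ = 1) {c h : ℝ} (hc : 0 ≤ c) (hh : 0 < h) {n : ℕ}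
    (htn : t n - t 0 ≤ h) :
    P {ω | ∃ k ≤ n, c ≤ ⟪u, W (t k) ω - W (t 0) ω⟫} ≤ ENNReal.ofReal (exp (-c ^ 2 / (2 * h))) := by
  have := hW.isProb
  set ξ : ℕ → Ω → ℝ := fun m ω => ⟪u, W (t (m + 1)) ω - W (t m) ω⟫
  have hrange : ∀ k ω, ∑ m ∈ range k, ξ m ω = ⟪u, W (t k) ω - W (t 0) ω⟫ := fun k ω => by
    simp only [ξ, inner_sub_right]
    exact sum_range_sub (fun m => ⟪u, W (t m) ω⟫) k
  have hIco : ∀ i j, i ≤ j → ∀ ω, ∑ m ∈ Ico i j, ξ m ω = ⟪u, W (t j) ω - W (t i) ω⟫ :=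
    fun i j hij ω => by
      rw [sum_Ico_eq_sub _ hij, hrange, hrange, inner_sub_right, inner_sub_right, inner_sub_right]
      ring
  have hindep : ∀ n, iIndepFun (fun m : Fin n => ξ m) P := fun n =>
    (hW.indep n t ht ht0).comp (fun _ x => ⟪u, x⟫) fun _ => measurable_const.inner measurable_id
  have hmeas : ∀ m, Measurable (ξ m) := fun m =>
    measurable_const.inner ((hW.meas _).sub (hW.meas _))
  have hl : 0 ≤ c / h := div_nonneg hc hh.le
  have hmgf : ∀ i j, i ≤ j → 1 ≤ mgf (fun ω => ∑ m ∈ Ico i j, ξ m ω) P (c / h) := fun i j hij => by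
    simp only [hIco i j hij]
    rw [hW.mgf_inner_sub (ht0.trans (ht (Nat.zero_le i))) (ht hij) hu]
    exact one_le_exp (by have := sub_nonneg.2 (ht hij); positivity)
  have hbound := measure_exists_sum_range_ge_le hindep hmeas hl hmgf c n
  simp only [hrange] at hbound
  rw [hW.mgf_inner_sub ht0 (ht (Nat.zero_le n)) hu, ← exp_add] at hbound
  refine hbound.trans (ENNReal.ofReal_le_ofReal (exp_le_exp.2 ?_))
  have hvar : -(c / h * c) + (t n - t 0) * (c / h) ^ 2 / 2
      ≤ -(c / h * c) + h * (c / h) ^ 2 / 2 := by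
    gcongr
  refine hvar.trans (le_of_eq ?_)
  field_simp
  ring

theorem measure_exists_norm_ge_le (hW : IsBrownianMotion P W) {t : ℕ → ℝ} (ht : Monotone t)
    (ht0 : 0 ≤ t 0) {c h : ℝ} (hc : 0 < c) (hh : 0 < h) {n : ℕ} (htn : t n - t 0 ≤ h) :
    P {ω | ∃ k ≤ n, c ≤ ‖W (t k) ω - W (t 0) ω‖}
      ≤ ENNReal.ofReal (2 * d * exp (-c ^ 2 / (2 * d * h))) := by
  set A : Euc d → Set Ω := fun u => {ω | ∃ k ≤ n, c / √d ≤ ⟪u, W (t k) ω - W (t 0) ω⟫}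
  have hA : ∀ (i : Fin d) (σ : ℝ), |σ| = 1 →
      P (A (EuclideanSpace.single i σ)) ≤ ENNReal.ofReal (exp (-c ^ 2 / (2 * d * h))) := by
    intro i σ hσ
    have hexp : -(c / √d) ^ 2 / (2 * h) = -c ^ 2 / (2 * d * h) := by
      rw [div_pow, Real.sq_sqrt (Nat.cast_nonneg _)]
      ring
    rw [← hexp]
    exact hW.measure_exists_inner_ge_le ht ht0 (by simp [hσ]) (by positivity) hh htn
  have hcover : {ω | ∃ k ≤ n, c ≤ ‖W (t k) ω - W (t 0) ω‖}
      ⊆ ⋃ i, A (EuclideanSpace.single i 1) ∪ A (EuclideanSpace.single i (-1)) := by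
    rintro ω ⟨k, hkn, hk⟩
    set v := W (t k) ω - W (t 0) ω
    obtain ⟨i, hi⟩ := EuclideanSpace.exists_norm_le_sqrt_card_mul_abs
      (norm_pos_iff.1 (hc.trans_le hk))
    rw [Fintype.card_fin] at hi
    have hd : 0 < √(d : ℝ) := pos_of_mul_pos_left ((hc.trans_le hk).trans_le hi) (abs_nonneg _)
    have hvi : c / √d ≤ |v i| := (div_le_iff₀' hd).2 (hk.trans hi)
    refine mem_iUnion.2 ⟨i, ?_⟩
    rcases le_abs.1 hvi with hpos | hneg
    · exact Or.inl ⟨k, hkn, by simpa [A, v, EuclideanSpace.inner_single_left] using hpos⟩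
    · exact Or.inr ⟨k, hkn, by simpa [A, v, EuclideanSpace.inner_single_left] using hneg⟩
  calc P {ω | ∃ k ≤ n, c ≤ ‖W (t k) ω - W (t 0) ω‖}
      ≤ ∑ i : Fin d, P (A (EuclideanSpace.single i 1) ∪ A (EuclideanSpace.single i (-1))) :=
        (measure_mono hcover).trans (measure_iUnion_fintype_le _ _)
    _ ≤ ∑ _i : Fin d, 2 * ENNReal.ofReal (exp (-c ^ 2 / (2 * d * h))) := by
        gcongr with i
        exact (measure_union_le _ _).trans
          ((add_le_add (hA i 1 (by simp)) (hA i (-1) (by simp))).trans_eq (two_mul _).symm)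
    _ = ENNReal.ofReal (2 * d * exp (-c ^ 2 / (2 * d * h))) := by
        rw [sum_const, card_univ, Fintype.card_fin, nsmul_eq_mul,
          ENNReal.ofReal_mul (by positivity), ENNReal.ofReal_mul (by positivity),
          ENNReal.ofReal_ofNat, ENNReal.ofReal_natCast]
        ring

theorem measure_exists_Icc_norm_sub_gt_le (hW : IsBrownianMotion P W) {a h c : ℝ} (ha : 0 ≤ a)
    (hh : 0 < h) (hc : 0 < c) :
    P {ω | ∃ u ∈ Icc a (a + h), c < ‖W u ω - W a ω‖}
      ≤ ENNReal.ofReal (2 * d * exp (-c ^ 2 / (2 * d * h))) := by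
  -- the level-`m` dyadic grid of `[a, a + h]`, capped at `k = 2 ^ m` to be monotone on `ℕ`
  set τ : ℕ → ℕ → ℝ := fun m k => a + h * (min k (2 ^ m) : ℕ) / 2 ^ m
  set A : ℕ → Set Ω := fun m => {ω | ∃ k ≤ 2 ^ m, c ≤ ‖W (τ m k) ω - W (τ m 0) ω‖}
  have hτ0 : ∀ m, τ m 0 = a := by simp [τ]
  have hτ : ∀ m k, k ≤ 2 ^ m → τ m k = a + h * k / 2 ^ m := fun m k hk => by
    simp only [τ, min_eq_left hk]
  have hτmono : ∀ m, Monotone (τ m) := fun m k k' hkk' => by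
    simp only [τ]
    gcongr
  have hmono : Monotone A := by
    refine monotone_nat_of_le_succ fun m ω ⟨k, hk, hω⟩ => ⟨2 * k, by rw [pow_succ]; omega, ?_⟩
    rw [hτ (m + 1) (2 * k) (by rw [pow_succ]; omega), hτ0]
    rw [hτ m k hk, hτ0] at hω
    convert hω using 5
    push_cast
    field_simp
    ring
  have hcover : {ω | ∃ u ∈ Icc a (a + h), c < ‖W u ω - W a ω‖} ⊆ ⋃ m, A m := by
    rintro ω ⟨u, hu, hω⟩
    obtain ⟨m, k, hk, hlt⟩ :=
      exists_dyadic_lt_of_lt ((hW.cont ω).sub continuous_const).norm hh hu hω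
    exact mem_iUnion.2 ⟨m, k, hk, by rw [hτ m k hk, hτ0]; exact hlt.le⟩
  calc P {ω | ∃ u ∈ Icc a (a + h), c < ‖W u ω - W a ω‖} ≤ P (⋃ m, A m) := measure_mono hcover
    _ = ⨆ m, P (A m) := hmono.measure_iUnion
    _ ≤ _ := iSup_le fun m => hW.measure_exists_norm_ge_le (hτmono m) (by rw [hτ0]; exact ha) hc hh
      (by rw [hτ m _ le_rfl, hτ0]; field_simp; simp)

end IsBrownianMotion

theorem brownian_modulus_tail_estimate_general
    {d : ℕ} {Ω : Type*} [MeasurableSpace Ω] (P : Measure Ω)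
    (W : ℝ → Ω → Euc d) (hW : IsBrownianMotion P W)
    (δ ξ : ℝ) (hδ : δ ∈ Set.Ioc (0:ℝ) (1/2)) (hξ : 0 < ξ) :
    P {ω | ∃ s ∈ Set.Icc (0:ℝ) 1, ∃ t ∈ Set.Icc (0:ℝ) 1,
        |t - s| ≤ δ ∧ ξ ≤ ‖W t ω - W s ω‖}
      ≤ ENNReal.ofReal ((4 * d / δ) * Real.exp (-ξ ^ 2 / (256 * d * δ))) := by
  obtain ⟨hδ0, hδ2⟩ := hδ
  set N := ⌊1 / δ⌋₊ + 1
  set B := 2 * d * exp (-(ξ / 4) ^ 2 / (2 * d * (2 * δ)))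
  have hcover : {ω | ∃ s ∈ Icc (0:ℝ) 1, ∃ t ∈ Icc (0:ℝ) 1, |t - s| ≤ δ ∧ ξ ≤ ‖W t ω - W s ω‖}
      ⊆ ⋃ j ∈ range N, {ω | ∃ u ∈ Icc (j * δ) (j * δ + 2 * δ), ξ / 4 < ‖W u ω - W (j * δ) ω‖} := by
    rintro ω ⟨s, hs, t, ht, hst, hω⟩
    obtain ⟨j, hj, hblock⟩ :=
      exists_Icc_lt_norm_sub_of_le_norm_sub (f := fun r => W r ω) hδ0 hξ hs ht hst hω
    exact mem_biUnion (mem_range_succ_iff.2 hj) hblock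
  have hexp : exp (-(ξ / 4) ^ 2 / (2 * d * (2 * δ))) ≤ exp (-ξ ^ 2 / (256 * d * δ)) := by
    rw [exp_le_exp, show -(ξ / 4) ^ 2 / (2 * d * (2 * δ)) = -(4 * (ξ ^ 2 / (256 * d * δ))) by ring,
      neg_div]
    linarith [show 0 ≤ ξ ^ 2 / (256 * d * δ) by positivity]
  calc _ ≤ ∑ j ∈ range N,
        P {ω | ∃ u ∈ Icc (j * δ) (j * δ + 2 * δ), ξ / 4 < ‖W u ω - W (j * δ) ω‖} :=
        (measure_mono hcover).trans (measure_biUnion_finset_le _ _)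
    _ ≤ ∑ _j ∈ range N, ENNReal.ofReal B := sum_le_sum fun j _ =>
        hW.measure_exists_Icc_norm_sub_gt_le (by positivity) (by positivity) (by positivity)
    _ = ENNReal.ofReal (N * B) := by
        rw [sum_const, card_range, nsmul_eq_mul, ENNReal.ofReal_mul (Nat.cast_nonneg N),
          ENNReal.ofReal_natCast]
    _ ≤ _ := by
        refine ENNReal.ofReal_le_ofReal ?_
        calc (N : ℝ) * B ≤ 2 / δ * B := by
              gcongr
              exact_mod_cast natFloor_one_div_add_one_le hδ0 (by linarith)
          _ = 4 * d / δ * exp (-(ξ / 4) ^ 2 / (2 * d * (2 * δ))) := by ring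
          _ ≤ _ := by gcongr

/-- the mesh-based modulus-of-continuity tail estimate for Brownian motion:
for `δ ∈ (0, 1/2]` and `ξ > 0`,
`P(∃ s,t ∈ [0,1], |t−s| ≤ δ and |W_t − W_s| ≥ ξ) ≤ (4d/δ)·exp(−ξ²/(256 d δ))`. -/
theorem brownian_modulus_tail_estimate
    {d : ℕ} (hd : 1 ≤ d) {Ω : Type*} [MeasurableSpace Ω] (P : Measure Ω)
    (W : ℝ → Ω → Euc d) (hW : IsBrownianMotion P W)
    (δ ξ : ℝ) (hδ : δ ∈ Set.Ioc (0:ℝ) (1/2)) (hξ : 0 < ξ) :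
    P {ω | ∃ s ∈ Set.Icc (0:ℝ) 1, ∃ t ∈ Set.Icc (0:ℝ) 1,
        |t - s| ≤ δ ∧ ξ ≤ ‖W t ω - W s ω‖}
      ≤ ENNReal.ofReal ((4 * d / δ) * Real.exp (-ξ ^ 2 / (256 * d * δ))) :=
  brownian_modulus_tail_estimate_general P W hW δ ξ hδ hξ
end
end
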